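/- Let t ≥ 2 and n ≥ 0 be integers with (t,n) ≠ (2,6). Then the coefficient of q^n in the formal power series D = ((q^t;q^t)_∞/(q^2;q)_∞) · (q^2 + q^4)/(1−q^6) − ((q^t;q^t)_∞/(q;q)_∞) · q^{2t−2}(1−q)(1−q^3)/(1−q^{2t}) is nonnegative. -/

import Mathlib

open Finset PowerSeries

/-- The infinite product `(q^a ; q^d)_∞ = ∏_{i ≥ 0} (1 - q^{a + d·i})` as a formal power
series (for `a ≥ 1`): the coefficient of `q^n` in the partial products stabilizes, since the
factors with `i > n` have valuation `> n`, so we may define the product coefficientwise. -/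
noncomputable def qpoch (a d : ℕ) : PowerSeries ℚ :=
  PowerSeries.mk fun n =>
    PowerSeries.coeff (R := ℚ) n
      (∏ i ∈ Finset.range (n + 1), (1 - (PowerSeries.X : PowerSeries ℚ) ^ (a + d * i)))

/-!
Write `G_t = (q^t;q^t)_∞ / (q^2;q)_∞ = ∏_{k ≥ 2, t ∤ k} (1 - q^k)⁻¹`, the generating function of
partitions into parts `≥ 2` not divisible by `t`. Since `(q;q)_∞ = (1 - q) (q^2;q)_∞`, we get
`D = B_t G_t` with `B_t = (q^2 + q^4)/(1 - q^6) - q^{2t-2}(1 - q^3)/(1 - q^{2t})`. The coefficients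
of `B_t` are integers whose only negative values are `-1`, at the indices `j` with `2t ∣ j + 2` and
`3 ∣ j`. Each such `j` is matched injectively with an index `j' < j` where `B_t` has coefficient
`1` and `G_t(n - j) ≤ G_t(n - j')`: for `t ≥ 3` take `j' = j - 2` and add a part `2`; for `t = 2`
take `j' = j - 9` and add a part `9`, except for `j = 6`, where `j' = 4` and the largest part of
a (nonempty, as `n ≠ 6`) partition of `n - 6` is enlarged by `2`.
-/

open scoped PowerSeries.WithPiTopology

section Geometric

variable {K : Type*} [Field K]

theorem inv_one_sub_X_pow {k : ℕ} (hk : k ≠ 0) :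
    (1 - X ^ k : K⟦X⟧)⁻¹ = mk fun m ↦ if k ∣ m then 1 else 0 := by
  rw [inv_eq_iff_mul_eq_one (by simp [hk])]
  ext m
  rw [mul_sub, mul_one, map_sub, coeff_mul_X_pow', coeff_mk, coeff_one]
  rcases Nat.eq_zero_or_pos m with rfl | hm
  · simp [hk]
  by_cases hkm : k ≤ m
  · have : k ∣ m - k ↔ k ∣ m :=
      Nat.dvd_sub_self_right.trans (or_iff_left_of_imp fun h ↦ le_antisymm hkm h ▸ dvd_rfl)
    simp [hkm, this, hm.ne']
  · simp [hkm, Nat.not_dvd_of_pos_of_lt hm (not_le.1 hkm), hm.ne']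

theorem coeff_X_pow_mul_inv_one_sub_X_pow {k : ℕ} (hk : k ≠ 0) (a j : ℕ) :
    coeff j (X ^ a * (1 - X ^ k : K⟦X⟧)⁻¹) = if a ≤ j ∧ k ∣ j - a then 1 else 0 := by
  rw [coeff_X_pow_mul', inv_one_sub_X_pow hk, coeff_mk, ite_and]

end Geometric

theorem one_sub_X_pow_mul_tsum {R : Type*} [CommRing R] [TopologicalSpace R]
    [IsTopologicalRing R] [T2Space R] {k : ℕ} (hk : k ≠ 0) :
    (1 - X ^ k : R⟦X⟧) * ∑' j, X ^ (k * j) = 1 := by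
  simp_rw [pow_mul]
  exact WithPiTopology.one_sub_mul_tsum_pow_of_constantCoeff_eq_zero (by simp [hk])

section Truncation

variable {R : Type*} [CommRing R]

theorem coeff_mul_eq_of_X_pow_dvd_sub_one {f g : R⟦X⟧} {n : ℕ} (h : X ^ (n + 1) ∣ g - 1) :
    coeff n (f * g) = coeff n f := by
  have hfg : X ^ (n + 1) ∣ f * (g - 1) := dvd_mul_of_dvd_right h f
  rw [show f * g = f + f * (g - 1) by ring, map_add,
    (X_pow_dvd_iff.1 hfg) n n.lt_succ_self, add_zero]

theorem X_pow_dvd_prod_sub_one {ι : Type*} {s : Finset ι} {f : ι → R⟦X⟧} {N : ℕ}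
    (h : ∀ i ∈ s, X ^ N ∣ f i - 1) : X ^ N ∣ ∏ i ∈ s, f i - 1 :=
  Finset.prod_induction f (fun g ↦ X ^ N ∣ g - 1)
    (fun a b ha hb ↦ by
      rw [show a * b - 1 = (a - 1) * b + (b - 1) by ring]
      exact dvd_add (dvd_mul_of_dvd_left ha b) hb)
    (by simp) h

end Truncation

section QPochhammer

theorem hasProd_qpoch (a : ℕ) {d : ℕ} (hd : d ≠ 0) :
    HasProd (fun i ↦ 1 - X ^ (a + d * i)) (qpoch a d) := by
  rw [HasProd, WithPiTopology.tendsto_iff_coeff_tendsto]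
  refine fun n ↦ tendsto_atTop_of_eventually_const fun s (hs : range (n + 1) ⊆ s) ↦ ?_
  rw [qpoch, coeff_mk, ← prod_sdiff hs, mul_comm, coeff_mul_eq_of_X_pow_dvd_sub_one]
  refine X_pow_dvd_prod_sub_one fun i hi ↦ ?_
  have hi : n + 1 ≤ a + d * i := by
    have := Nat.le_mul_of_pos_left i (Nat.pos_of_ne_zero hd)
    simp only [mem_sdiff, mem_range] at hi
    omega
  simpa using pow_dvd_pow X hi

theorem hasProd_qpoch_of_iff {a d : ℕ} (ha : a ≠ 0) (hd : d ≠ 0) (P : ℕ → Prop) [DecidablePred P]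
    (hP : ∀ k ≠ 0, P k ↔ ∃ i, k = a + d * i) :
    HasProd (fun i ↦ if P (i + 1) then 1 - X ^ (i + 1) else 1) (qpoch a d) := by
  have hg : Function.Injective fun i ↦ a + d * i - 1 := fun i j hij ↦
    Nat.eq_of_mul_eq_mul_left (Nat.pos_of_ne_zero hd) (by simp only at hij; omega)
  refine (hg.hasProd_iff fun x hx ↦ if_neg fun hPx ↦ hx ?_).mp ?_
  · obtain ⟨i, hi⟩ := (hP _ x.succ_ne_zero).1 hPx
    exact ⟨i, by simp only; omega⟩
  · convert hasProd_qpoch a hd using 2 with i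
    have hi : a + d * i - 1 + 1 = a + d * i := by omega
    simp [hi, hP _ (by omega : a + d * i ≠ 0)]

theorem constantCoeff_qpoch {a : ℕ} (ha : a ≠ 0) (d : ℕ) : constantCoeff (qpoch a d) = 1 := by
  rw [← coeff_zero_eq_constantCoeff_apply, qpoch, coeff_mk]
  simp [ha]

theorem qpoch_one_one : qpoch 1 1 = (1 - X) * qpoch 2 1 := by
  have h : HasProd (fun i ↦ (1 : ℚ⟦X⟧) - X ^ (1 + 1 * (i + 1))) (qpoch 2 1) := by
    convert hasProd_qpoch 2 one_ne_zero using 4 with i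
    ring
  simpa using (hasProd_qpoch 1 one_ne_zero).unique (h.zero_mul (f := fun i ↦ 1 - X ^ (1 + 1 * i)))

end QPochhammer

theorem Multiset.sup_mem_of_ne_zero {α : Type*} [LinearOrder α] [OrderBot α] {s : Multiset α}
    (hs : s ≠ 0) : s.sup ∈ s := by
  obtain ⟨i, hi, hsup⟩ := s.toFinset.exists_mem_eq_sup (Multiset.toFinset_nonempty.2 hs) id
  rw [Finset.sup_def, Multiset.toFinset_val, Multiset.map_id, Multiset.sup_dedup] at hsup
  exact hsup ▸ Multiset.mem_toFinset.1 hi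

namespace Nat.Partition

variable (p : ℕ → Prop) [DecidablePred p]

theorem card_restricted_le_add {k : ℕ} (hk : 0 < k) (hpk : p k) (m : ℕ) :
    #(restricted m p) ≤ #(restricted (m + k) p) := by
  refine card_le_card_of_injOn (fun P ↦ ⟨k ::ₘ P.parts, ?_, ?_⟩) ?_ ?_
  · intro i hi
    exact (Multiset.mem_cons.1 hi).elim (· ▸ hk) P.parts_pos
  · rw [Multiset.sum_cons, P.parts_sum, add_comm]
  · intro P hP
    simp only [restricted, coe_filter, mem_univ, true_and] at hP ⊢
    intro i hi
    rcases Multiset.mem_cons.1 hi with rfl | hi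
    exacts [hpk, hP i hi]
  · intro P _ Q _ h
    exact Nat.Partition.ext ((Multiset.cons_inj_right k).1 (congrArg Nat.Partition.parts h))

theorem parts_ne_zero {m : ℕ} (hm : m ≠ 0) (P : m.Partition) : P.parts ≠ 0 := fun h ↦
  hm (by rw [← P.parts_sum, h, Multiset.sum_zero])

/-- Enlarging the largest part by `d` is injective, since the largest part can be recovered. -/
theorem card_restricted_le_add_of_forall {d m : ℕ} (hp : ∀ k, p k → p (k + d)) (hm : m ≠ 0) :
    #(restricted m p) ≤ #(restricted (m + d) p) := by
  have hmax (P : m.Partition) := Multiset.sup_mem_of_ne_zero (parts_ne_zero hm P)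
  refine card_le_card_of_injOn
    (fun P ↦ ⟨(P.parts.sup + d) ::ₘ P.parts.erase P.parts.sup, ?_, ?_⟩) ?_ ?_
  · intro i hi
    rcases Multiset.mem_cons.1 hi with rfl | hi
    · exact (P.parts_pos (hmax P)).trans_le (Nat.le_add_right _ _)
    · exact P.parts_pos (Multiset.mem_of_mem_erase hi)
  · have := congrArg Multiset.sum (Multiset.cons_erase (hmax P))
    rw [Multiset.sum_cons, P.parts_sum] at this
    rw [Multiset.sum_cons]
    omega
  · intro P hP
    simp only [restricted, coe_filter, mem_univ, true_and] at hP ⊢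
    intro i hi
    rcases Multiset.mem_cons.1 hi with rfl | hi
    exacts [hp _ (hP _ (hmax P)), hP i (Multiset.mem_of_mem_erase hi)]
  · intro P _ Q _ h
    have hPQ := congrArg Nat.Partition.parts h
    simp only at hPQ
    have hsup : P.parts.sup = Q.parts.sup := by
      have hP : P.parts.sup + d ∈ (Q.parts.sup + d) ::ₘ Q.parts.erase Q.parts.sup :=
        hPQ ▸ Multiset.mem_cons_self _ _
      have hQ : Q.parts.sup + d ∈ (P.parts.sup + d) ::ₘ P.parts.erase P.parts.sup :=
        hPQ ▸ Multiset.mem_cons_self _ _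
      rcases Multiset.mem_cons.1 hP with hP | hP
      · omega
      rcases Multiset.mem_cons.1 hQ with hQ | hQ
      · omega
      have := Multiset.le_sup (Multiset.mem_of_mem_erase hP)
      have := Multiset.le_sup (Multiset.mem_of_mem_erase hQ)
      omega
    rw [hsup, Multiset.cons_inj_right] at hPQ
    ext1
    rw [← Multiset.cons_erase (hmax P), ← Multiset.cons_erase (hmax Q), hsup, hPQ]

end Nat.Partition

section PartitionGF

open Nat.Partition

noncomputable def partitionGF (t : ℕ) : ℚ⟦X⟧ :=
  mk fun n ↦ #(restricted n fun k ↦ 2 ≤ k ∧ ¬ t ∣ k)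

theorem qpoch_self_eq_mul_partitionGF {t : ℕ} (ht : 2 ≤ t) :
    qpoch t t = qpoch 2 1 * partitionGF t := by
  have h2 := hasProd_qpoch_of_iff two_ne_zero one_ne_zero (2 ≤ ·) fun k _ ↦
    ⟨fun hk ↦ ⟨k - 2, by omega⟩, by rintro ⟨i, rfl⟩; omega⟩
  have htt := hasProd_qpoch_of_iff (a := t) (d := t) (by omega) (by omega) (t ∣ ·) fun k hk ↦ by
    constructor
    · rintro ⟨_ | c, rfl⟩
      · exact absurd (mul_zero t) hk
      · exact ⟨c, by ring⟩
    · rintro ⟨i, rfl⟩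
      exact ⟨1 + i, by ring⟩
  have hG := hasProd_powerSeriesMk_card_restricted ℚ fun k ↦ 2 ≤ k ∧ ¬ t ∣ k
  refine htt.unique ((h2.mul hG).congr_fun fun i ↦ ?_)
  by_cases h2i : 2 ≤ i + 1 <;> by_cases hti : t ∣ i + 1
  · simp [h2i, hti]
  · simp [h2i, hti, one_sub_X_pow_mul_tsum]
  · exact absurd (Nat.le_of_dvd i.succ_pos hti) (by omega)
  · simp [h2i, hti]

theorem coeff_partitionGF (t n : ℕ) :
    coeff n (partitionGF t) = #(restricted n fun k ↦ 2 ≤ k ∧ ¬ t ∣ k) :=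
  coeff_mk _ _

theorem coeff_partitionGF_nonneg (t n : ℕ) : 0 ≤ coeff n (partitionGF t) := by
  rw [coeff_partitionGF]
  exact Nat.cast_nonneg _

theorem coeff_partitionGF_le_add {t k : ℕ} (hk : 2 ≤ k) (htk : ¬ t ∣ k) (m : ℕ) :
    coeff m (partitionGF t) ≤ coeff (m + k) (partitionGF t) := by
  rw [coeff_partitionGF, coeff_partitionGF]
  exact_mod_cast card_restricted_le_add (fun k ↦ 2 ≤ k ∧ ¬ t ∣ k) (by omega) ⟨hk, htk⟩ m

theorem coeff_partitionGF_two_le_add_two {m : ℕ} (hm : m ≠ 0) :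
    coeff m (partitionGF 2) ≤ coeff (m + 2) (partitionGF 2) := by
  rw [coeff_partitionGF, coeff_partitionGF]
  exact_mod_cast card_restricted_le_add_of_forall _ (fun k hk ↦ by omega) hm

end PartitionGF

theorem Finset.sum_nonneg_of_injOn_of_add_nonneg {ι M : Type*} [AddCommGroup M] [LinearOrder M]
    [IsOrderedAddMonoid M] {s : Finset ι} {f : ι → M} (φ : ι → ι)
    (hφ : ∀ i ∈ s, f i < 0 → φ i ∈ s ∧ 0 ≤ f i + f (φ i))
    (hinj : Set.InjOn φ {i | i ∈ s ∧ f i < 0}) : 0 ≤ ∑ i ∈ s, f i := by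
  classical
  have hinj' : Set.InjOn φ (s.filter (f · < 0)) := fun i hi j hj ↦
    hinj (by simpa using hi) (by simpa using hj)
  have himage : (s.filter (f · < 0)).image φ ⊆ s.filter (¬ f · < 0) := by
    intro j hj
    obtain ⟨i, hi, rfl⟩ := mem_image.1 hj
    obtain ⟨his, hneg⟩ := mem_filter.1 hi
    obtain ⟨hφs, hadd⟩ := hφ i his hneg
    exact mem_filter.2 ⟨hφs, not_lt.2 ((neg_pos.2 hneg).le.trans (neg_le_iff_add_nonneg'.2 hadd))⟩
  rw [← sum_filter_add_sum_filter_not s (f · < 0)]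
  calc 0 ≤ ∑ i ∈ s.filter (f · < 0), (f i + f (φ i)) :=
        sum_nonneg fun i hi ↦ (hφ i (mem_filter.1 hi).1 (mem_filter.1 hi).2).2
    _ = ∑ i ∈ s.filter (f · < 0), f i + ∑ j ∈ (s.filter (f · < 0)).image φ, f j := by
        rw [sum_add_distrib, sum_image hinj']
    _ ≤ _ := add_le_add le_rfl <|
        sum_le_sum_of_subset_of_nonneg himage fun j hj _ ↦ not_lt.1 (mem_filter.1 hj).2

theorem coeff_mul_nonneg_of_injOn {R : Type*} [CommRing R] [LinearOrder R] [IsStrictOrderedRing R]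
    {B G : R⟦X⟧} {n : ℕ} (hG : ∀ m, 0 ≤ coeff m G) (φ : ℕ → ℕ)
    (hφ : ∀ j ≤ n, coeff j B < 0 → φ j ≤ n ∧ 0 ≤ coeff j B + coeff (φ j) B ∧
      coeff (n - j) G ≤ coeff (n - φ j) G)
    (hinj : Set.InjOn φ {j | j ≤ n ∧ coeff j B < 0}) : 0 ≤ coeff n (B * G) := by
  rw [coeff_mul, Nat.sum_antidiagonal_eq_sum_range_succ_mk]
  have hneg {j : ℕ} (h : coeff j B * coeff (n - j) G < 0) : coeff j B < 0 :=
    lt_of_not_ge fun hj ↦ h.not_ge (mul_nonneg hj (hG _))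
  refine sum_nonneg_of_injOn_of_add_nonneg φ (fun j hj h ↦ ?_) fun i hi j hj ↦
    hinj ⟨by simpa [Nat.lt_succ_iff] using hi.1, hneg hi.2⟩
      ⟨by simpa [Nat.lt_succ_iff] using hj.1, hneg hj.2⟩
  have hBj := hneg h
  obtain ⟨hφn, hb, hg⟩ := hφ j (by simpa [Nat.lt_succ_iff] using hj) hBj
  refine ⟨by simpa [Nat.lt_succ_iff] using hφn, ?_⟩
  nlinarith [mul_nonneg hb (hG (n - φ j)), mul_nonneg (neg_nonneg.2 hBj.le) (sub_nonneg.2 hg)]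

section Bracket

noncomputable def bracket (t : ℕ) : ℚ⟦X⟧ :=
  (X ^ 2 + X ^ 4) * (1 - X ^ 6)⁻¹ - X ^ (2 * t - 2) * (1 - X ^ 3) * (1 - X ^ (2 * t))⁻¹
theorem coeff_bracket {t : ℕ} (ht : t ≠ 0) (j : ℕ) :
    coeff j (bracket t) =
      (if j % 6 = 2 then 1 else 0) + (if j % 6 = 4 then 1 else 0)
        - (if 2 * t ∣ j + 2 then 1 else 0) + (if 2 * t + 1 ≤ j ∧ 2 * t ∣ j - 1 then 1 else 0) := by
  have h : bracket t = X ^ 2 * (1 - X ^ 6)⁻¹ + X ^ 4 * (1 - X ^ 6)⁻¹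
      - X ^ (2 * t - 2) * (1 - X ^ (2 * t))⁻¹ + X ^ (2 * t + 1) * (1 - X ^ (2 * t))⁻¹ := by
    rw [bracket, show 2 * t + 1 = 2 * t - 2 + 3 by omega, pow_add]
    ring
  have h2 : 2 ≤ j ∧ 6 ∣ j - 2 ↔ j % 6 = 2 := by omega
  have h4 : 4 ≤ j ∧ 6 ∣ j - 4 ↔ j % 6 = 4 := by omega
  have hneg : 2 * t - 2 ≤ j ∧ 2 * t ∣ j - (2 * t - 2) ↔ 2 * t ∣ j + 2 := by
    constructor
    · rintro ⟨hj, hdvd⟩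
      rwa [show j + 2 = j - (2 * t - 2) + 2 * t by omega, Nat.dvd_add_self_right]
    · intro hdvd
      have := Nat.le_of_dvd (by omega : 0 < j + 2) hdvd
      rw [← Nat.dvd_add_self_right, show j - (2 * t - 2) + 2 * t = j + 2 by omega]
      exact ⟨by omega, hdvd⟩
  have hpos : 2 * t + 1 ≤ j ∧ 2 * t ∣ j - (2 * t + 1) ↔ 2 * t + 1 ≤ j ∧ 2 * t ∣ j - 1 :=
    and_congr_right fun hj ↦ by
      rw [← Nat.dvd_add_self_right, show j - (2 * t + 1) + 2 * t = j - 1 by omega]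
  simp only [h, map_add, map_sub, coeff_X_pow_mul_inv_one_sub_X_pow (by omega : 6 ≠ 0),
    coeff_X_pow_mul_inv_one_sub_X_pow (by omega : 2 * t ≠ 0), h2, h4, hneg, hpos]

theorem coeff_bracket_nonneg_or {t : ℕ} (ht : t ≠ 0) (j : ℕ) :
    0 ≤ coeff j (bracket t) ∨ coeff j (bracket t) = -1 ∧ 2 * t ∣ j + 2 ∧ 3 ∣ j := by
  rw [coeff_bracket ht]
  by_cases hneg : 2 * t ∣ j + 2
  · have heven : 2 ∣ j + 2 := (Dvd.intro t rfl).trans hneg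
    have hodd : ¬ (2 * t + 1 ≤ j ∧ 2 * t ∣ j - 1) := fun h ↦ by
      have : 2 ∣ j - 1 := (Dvd.intro t rfl).trans h.2
      omega
    by_cases h3 : 3 ∣ j
    · right
      rw [if_neg (by omega), if_neg (by omega), if_pos hneg, if_neg hodd]
      exact ⟨by norm_num, hneg, h3⟩
    · left
      rw [if_pos hneg, if_neg hodd]
      rcases (by omega : j % 6 = 2 ∨ j % 6 = 4) with h | h <;> simp [h]
  · left
    rw [if_neg hneg]
    split_ifs <;> norm_num

theorem coeff_bracket_sub_two {t j : ℕ} (ht : 3 ≤ t) (hdvd : 2 * t ∣ j + 2) (h3 : 3 ∣ j) :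
    coeff (j - 2) (bracket t) = 1 := by
  have heven : 2 ∣ j + 2 := (Dvd.intro t rfl).trans hdvd
  have hj := Nat.le_of_dvd (by omega : 0 < j + 2) hdvd
  rw [coeff_bracket (by omega), if_neg (by omega), if_pos (by omega), if_neg, if_neg]
  · norm_num
  · rintro ⟨-, h⟩
    have : 2 ∣ j - 2 - 1 := (Dvd.intro t rfl).trans h
    omega
  · intro h
    rw [show j - 2 + 2 = j by omega] at h
    have h2 := (Nat.dvd_add_right h).1 hdvd
    have := Nat.le_of_dvd two_pos h2
    omega

theorem coeff_bracket_two_four : coeff 4 (bracket 2) = 1 := by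
  rw [coeff_bracket two_ne_zero]
  norm_num

theorem coeff_bracket_two_sub_nine {j : ℕ} (hj : j % 12 = 6) (h18 : 18 ≤ j) :
    coeff (j - 9) (bracket 2) = 1 := by
  rw [coeff_bracket two_ne_zero, if_neg (by omega), if_neg (by omega), if_neg (by omega),
    if_pos (by omega)]
  norm_num

end Bracket

theorem coeff_bracket_mul_partitionGF_nonneg_of_three_le {t : ℕ} (ht : 3 ≤ t) (n : ℕ) :
    0 ≤ coeff n (bracket t * partitionGF t) := by
  have hneg {j : ℕ} (h : coeff j (bracket t) < 0) :=
    (coeff_bracket_nonneg_or (by omega : t ≠ 0) j).resolve_left h.not_ge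
  refine coeff_mul_nonneg_of_injOn (coeff_partitionGF_nonneg t) (· - 2) (fun j hjn hj ↦ ?_) ?_
  · obtain ⟨hb, hdvd, h3⟩ := hneg hj
    have := Nat.le_of_dvd (by omega : 0 < j + 2) hdvd
    refine ⟨by omega, by rw [hb, coeff_bracket_sub_two ht hdvd h3]; norm_num, ?_⟩
    rw [show n - (j - 2) = n - j + 2 by omega]
    exact coeff_partitionGF_le_add le_rfl (fun h ↦ by have := Nat.le_of_dvd two_pos h; omega) _
  · intro i hi j hj hij
    have := Nat.le_of_dvd (by omega : 0 < i + 2) (hneg hi.2).2.1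
    have := Nat.le_of_dvd (by omega : 0 < j + 2) (hneg hj.2).2.1
    simp only at hij
    omega

theorem coeff_bracket_mul_partitionGF_two_nonneg {n : ℕ} (hn : n ≠ 6) :
    0 ≤ coeff n (bracket 2 * partitionGF 2) := by
  have hneg {j : ℕ} (h : coeff j (bracket 2) < 0) : coeff j (bracket 2) = -1 ∧ j % 12 = 6 := by
    obtain ⟨hb, hdvd, h3⟩ := (coeff_bracket_nonneg_or two_ne_zero j).resolve_left h.not_ge
    exact ⟨hb, by omega⟩
  refine coeff_mul_nonneg_of_injOn (coeff_partitionGF_nonneg 2) (fun j ↦ if j = 6 then 4 else j - 9)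
    (fun j hjn hj ↦ ?_) ?_
  · obtain ⟨hb, hj12⟩ := hneg hj
    by_cases hj6 : j = 6
    · subst hj6
      rw [if_pos rfl]
      refine ⟨by omega, by rw [hb, coeff_bracket_two_four]; norm_num, ?_⟩
      rw [show n - 4 = n - 6 + 2 by omega]
      exact coeff_partitionGF_two_le_add_two (by omega)
    · rw [if_neg hj6]
      refine ⟨by omega, by rw [hb, coeff_bracket_two_sub_nine hj12 (by omega)]; norm_num, ?_⟩
      rw [show n - (j - 9) = n - j + 9 by omega]
      exact coeff_partitionGF_le_add (by norm_num) (by norm_num) _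
  · intro i hi j hj hij
    have := (hneg hi.2).2
    have := (hneg hj.2).2
    simp only at hij
    split_ifs at hij <;> omega

theorem sub_eq_bracket_mul_partitionGF {t : ℕ} (ht : 2 ≤ t) :
    qpoch t t * (qpoch 2 1)⁻¹ * ((X ^ 2 + X ^ 4) * (1 - X ^ 6)⁻¹)
        - qpoch t t * (qpoch 1 1)⁻¹
            * (X ^ (2 * t - 2) * (1 - X) * (1 - X ^ 3) * (1 - X ^ (2 * t))⁻¹)
      = bracket t * partitionGF t := by
  have hc : constantCoeff (qpoch 2 1) ≠ 0 := by
    rw [constantCoeff_qpoch two_ne_zero]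
    exact one_ne_zero
  have h1X : constantCoeff (1 - X : ℚ⟦X⟧) ≠ 0 := by simp
  have e1 : qpoch t t * (qpoch 2 1)⁻¹ = partitionGF t := by
    rw [qpoch_self_eq_mul_partitionGF ht, mul_comm (qpoch 2 1), mul_assoc,
      PowerSeries.mul_inv_cancel _ hc, mul_one]
  have e2 : qpoch t t * (qpoch 1 1)⁻¹ * (1 - X) = partitionGF t := by
    rw [qpoch_self_eq_mul_partitionGF ht, qpoch_one_one, PowerSeries.mul_inv_rev]
    calc _ = partitionGF t * (qpoch 2 1 * (qpoch 2 1)⁻¹) * ((1 - X)⁻¹ * (1 - X)) := by ring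
      _ = _ := by
        rw [PowerSeries.mul_inv_cancel _ hc, PowerSeries.inv_mul_cancel _ h1X, mul_one, mul_one]
  calc _ = qpoch t t * (qpoch 2 1)⁻¹ * ((X ^ 2 + X ^ 4) * (1 - X ^ 6)⁻¹)
        - qpoch t t * (qpoch 1 1)⁻¹ * (1 - X)
            * (X ^ (2 * t - 2) * (1 - X ^ 3) * (1 - X ^ (2 * t))⁻¹) := by ring
    _ = _ := by
      rw [e1, e2, bracket]
      ring

theorem coeff_D_nonneg (t n : ℕ) (ht : 2 ≤ t) (htn : (t, n) ≠ (2, 6)) :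
    0 ≤ PowerSeries.coeff (R := ℚ) n
      (qpoch t t * (qpoch 2 1)⁻¹ * ((X ^ 2 + X ^ 4) * (1 - X ^ 6)⁻¹)
        - qpoch t t * (qpoch 1 1)⁻¹
            * (X ^ (2 * t - 2) * (1 - X) * (1 - X ^ 3) * (1 - X ^ (2 * t))⁻¹)) := by
  rw [sub_eq_bracket_mul_partitionGF ht]
  obtain rfl | ht3 := eq_or_lt_of_le ht
  · exact coeff_bracket_mul_partitionGF_two_nonneg fun hn ↦ htn (by rw [hn])
  · exact coeff_bracket_mul_partitionGF_nonneg_of_three_le ht3 n
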